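/- arXiv:1203.1048 — 8 statements merged into one kernel-verified Lean document; each statement's English description precedes it below -/
import Mathlib

section
/- Let L be a Lie algebra over a field K of characteristic zero and let (h,e,f) be an sl₂-triple in L such that ad(e) and ad(f) are nilpotent endomorphisms of L. Let θ = exp(ad e) ∘ exp(ad(−f)) ∘ exp(ad e), a Lie algebra automorphism of L. Then θ(e) = −f, θ(f) = −e, and θ(h) = −h. -/
/-! `(ad e)³` kills `h`, `e` and `f`, so on them `exp (ad e)` is the truncated series
`1 + ad e + (ad e)² / 2`, which gives `e ↦ e`, `h ↦ h - 2e`, `f ↦ f + h - e`.  Since `(-h, -f, -e)`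
is again an `sl₂`-triple, the same formulas describe `exp (ad (-f))`, and composing the three
exponentials is a direct computation. -/

/-- The exponential `exp D = Σₙ Dⁿ/n!` of an endomorphism `D`.  For a nilpotent `D` this
is the usual exponential, since the sum ranges over all `n` with `D ^ n ≠ 0`
(`D ^ n = 0` whenever `n ≥ nilpotencyClass D`). -/
noncomputable def expEnd {K M : Type*} [Field K] [AddCommGroup M] [Module K M]
    (D : Module.End K M) : Module.End K M :=
  ∑ n ∈ Finset.range (nilpotencyClass D + 1), (n.factorial : K)⁻¹ • D ^ n

open LieAlgebra

section expEnd

variable {K M : Type*} [Field K] [AddCommGroup M] [Module K M] {D : Module.End K M}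

theorem expEnd_apply_of_apply_eq_zero {x : M} (hx : D x = 0) : expEnd D x = x := by
  rw [expEnd, LinearMap.sum_apply, Finset.sum_eq_single 0]
  · simp
  · intro n _ hn
    obtain ⟨m, rfl⟩ := Nat.exists_eq_succ_of_ne_zero hn
    simp [pow_succ, hx]
  · simp

theorem expEnd_apply_eq_sum_range (hD : IsNilpotent D) {x : M} {N : ℕ} (hx : (D ^ N) x = 0) :
    expEnd D x = ∑ n ∈ Finset.range N, (n.factorial : K)⁻¹ • (D ^ n) x := by
  set c := nilpotencyClass D
  have vanish : ∀ n, (N ≤ n ∨ c ≤ n) → (n.factorial : K)⁻¹ • (D ^ n) x = 0 := by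
    rintro n (hn | hn)
    · rw [← Nat.sub_add_cancel hn, pow_add, Module.End.mul_apply, hx, map_zero, smul_zero]
    · rw [pow_eq_zero_of_le hn (pow_nilpotencyClass hD), LinearMap.zero_apply, smul_zero]
  have extend : ∀ A ≤ c + 1 + N, (∀ n, A ≤ n → N ≤ n ∨ c ≤ n) →
      ∑ n ∈ Finset.range A, (n.factorial : K)⁻¹ • (D ^ n) x =
        ∑ n ∈ Finset.range (c + 1 + N), (n.factorial : K)⁻¹ • (D ^ n) x := fun A hA hle =>
    Finset.sum_subset (Finset.range_subset_range.2 hA) fun n _ hn =>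
      vanish n (hle n (by simpa using hn))
  rw [expEnd, LinearMap.sum_apply]
  simp only [LinearMap.smul_apply]
  rw [extend (c + 1) (by omega) (fun _ _ => by omega), extend N (by omega) (fun _ _ => by omega)]

theorem expEnd_apply_of_pow_three_apply_eq_zero (hD : IsNilpotent D) {x : M}
    (hx : (D ^ 3) x = 0) : expEnd D x = x + D x + (2 : K)⁻¹ • D (D x) := by
  rw [expEnd_apply_eq_sum_range hD hx]
  simp [Finset.sum_range_succ, pow_succ, add_assoc]

end expEnd

section sl2

variable {K L : Type*} [Field K] [LieRing L] [LieAlgebra K L] {h e f : L}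

theorem expEnd_ad_e_apply_h (hnil : IsNilpotent (ad K L e)) (hhe : ⁅h, e⁆ = (2 : K) • e) :
    expEnd (ad K L e) h = h - (2 : K) • e := by
  have ad_h : ad K L e h = -((2 : K) • e) := by rw [ad_apply, ← lie_skew, hhe]
  rw [expEnd_apply_of_pow_three_apply_eq_zero hnil (by simp [pow_succ, ad_h]), ad_h]
  simp [sub_eq_add_neg]

theorem expEnd_ad_e_apply_f [CharZero K] (hnil : IsNilpotent (ad K L e))
    (hhe : ⁅h, e⁆ = (2 : K) • e) (hef : ⁅e, f⁆ = h) : expEnd (ad K L e) f = f + h - e := by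
  have ad_h : ad K L e h = -((2 : K) • e) := by rw [ad_apply, ← lie_skew, hhe]
  have ad_f : ad K L e f = h := hef
  rw [expEnd_apply_of_pow_three_apply_eq_zero hnil (by simp [pow_succ, ad_f, ad_h]), ad_f, ad_h,
    smul_neg, smul_smul, inv_mul_cancel₀ two_ne_zero, one_smul, sub_eq_add_neg]

end sl2

theorem weyl_element_on_sl2_triple_general
    {K L : Type*} [Field K] [CharZero K] [LieRing L] [LieAlgebra K L]
    (h e f : L)
    (hhe : ⁅h, e⁆ = (2 : K) • e) (hhf : ⁅h, f⁆ = (-2 : K) • f) (hef : ⁅e, f⁆ = h)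
    (hnile : IsNilpotent (LieAlgebra.ad K L e)) (hnilf : IsNilpotent (LieAlgebra.ad K L f))
    (θ : Module.End K L)
    (hθ : θ = expEnd (LieAlgebra.ad K L e) * expEnd (LieAlgebra.ad K L (-f)) *
      expEnd (LieAlgebra.ad K L e)) :
    θ e = -f ∧ θ f = -e ∧ θ h = -h := by
  have hhe' : ⁅-h, -f⁆ = (2 : K) • -f := by
    rw [neg_lie, lie_neg, neg_neg, hhf, neg_smul, smul_neg]
  have hef' : ⁅-f, -e⁆ = -h := by rw [neg_lie, lie_neg, neg_neg, ← lie_skew, hef]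
  have hnilf' : IsNilpotent (ad K L (-f)) := by rw [map_neg]; exact hnilf.neg
  have Ee := expEnd_apply_of_apply_eq_zero (D := ad K L e) (lie_self e)
  have Eh := expEnd_ad_e_apply_h hnile hhe
  have Ef := expEnd_ad_e_apply_f hnile hhe hef
  have Ff := expEnd_apply_of_apply_eq_zero (D := ad K L (-f)) (lie_self (-f))
  have Fh := expEnd_ad_e_apply_h hnilf' hhe'
  have Fe := expEnd_ad_e_apply_f hnilf' hhe' hef'
  rw [LinearMap.map_neg, neg_inj] at Ff
  rw [LinearMap.map_neg, neg_eq_iff_eq_neg] at Fh Fe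
  subst hθ
  refine ⟨?_, ?_, ?_⟩ <;>
  · simp only [Module.End.mul_apply, Ee, Ef, Eh, Fe, Ff, Fh, map_add, map_sub, LinearMap.map_neg,
      map_smul]
    module

/-- Let `(h, e, f)` be an `sl₂`-triple in a Lie algebra `L` over a field of characteristic
zero such that `ad e` and `ad f` are nilpotent, and let
`θ = exp(ad e) ∘ exp(ad (−f)) ∘ exp(ad e)`.  Then `θ e = −f`, `θ f = −e` and `θ h = −h`. -/
theorem weyl_element_on_sl2_triple
    {K L : Type*} [Field K] [CharZero K] [LieRing L] [LieAlgebra K L]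
    (h e f : L) (he : e ≠ 0) (hf : f ≠ 0)
    (hhe : ⁅h, e⁆ = (2 : K) • e) (hhf : ⁅h, f⁆ = (-2 : K) • f) (hef : ⁅e, f⁆ = h)
    (hnile : IsNilpotent (LieAlgebra.ad K L e)) (hnilf : IsNilpotent (LieAlgebra.ad K L f))
    (θ : Module.End K L)
    (hθ : θ = expEnd (LieAlgebra.ad K L e) * expEnd (LieAlgebra.ad K L (-f)) *
      expEnd (LieAlgebra.ad K L e)) :
    θ e = -f ∧ θ f = -e ∧ θ h = -h :=
  weyl_element_on_sl2_triple_general h e f hhe hhf hef hnile hnilf θ hθ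
end

section
/- Let L be a Lie algebra over a field K of characteristic zero and let (h,e,f) be an sl₂-triple in L such that ad(e) and ad(f) are nilpotent endomorphisms of L. Let θ = exp(ad e) ∘ exp(ad(−f)) ∘ exp(ad e). If x ∈ L and c ∈ K satisfy ⁅x,e⁆ = c•e and ⁅x,f⁆ = −c•f, then θ(x) = x − c•h. -/
lemma expEnd_apply_of_pow {K M : Type*} [Field K] [AddCommGroup M] [Module K M]
    (D : Module.End K M) (hD : IsNilpotent D) (m : M) (k : ℕ) (hk : (D ^ k) m = 0) :
    expEnd D m = ∑ n ∈ Finset.range k, (n.factorial : K)⁻¹ • (D ^ n) m := by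
  have hclass : D ^ nilpotencyClass D = 0 := pow_nilpotencyClass hD
  have h1 : expEnd D m = ∑ n ∈ Finset.range (max (nilpotencyClass D + 1) k),
      (n.factorial : K)⁻¹ • (D ^ n) m := by
    rw [expEnd, LinearMap.sum_apply]
    simp only [LinearMap.smul_apply]
    apply Finset.sum_subset (Finset.range_subset_range.mpr (le_max_left _ _))
    intro n hn hn'
    have hn2 : nilpotencyClass D ≤ n := by
      simp only [Finset.mem_range] at hn'; omega
    rw [pow_eq_zero_of_le hn2 hclass]
    simp
  rw [h1]
  symm
  apply Finset.sum_subset (Finset.range_subset_range.mpr (le_max_right _ _))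
  intro n hn hn'
  have hn2 : k ≤ n := by simp only [Finset.mem_range] at hn'; omega
  have : (D ^ n) m = 0 := by
    rw [← Nat.sub_add_cancel hn2, pow_add, Module.End.mul_apply, hk, map_zero]
  rw [this, smul_zero]

lemma expEnd_apply_two {K M : Type*} [Field K] [AddCommGroup M] [Module K M]
    (D : Module.End K M) (hD : IsNilpotent D) (m : M) (h2 : D (D m) = 0) :
    expEnd D m = m + D m := by
  rw [expEnd_apply_of_pow D hD m 2 (by simpa [pow_succ, Module.End.mul_apply] using h2)]
  simp [Finset.sum_range_succ, pow_succ, Module.End.mul_apply]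

lemma expEnd_apply_three {K M : Type*} [Field K] [AddCommGroup M] [Module K M]
    (D : Module.End K M) (hD : IsNilpotent D) (m : M) (h3 : D (D (D m)) = 0) :
    expEnd D m = m + D m + (2 : K)⁻¹ • D (D m) := by
  rw [expEnd_apply_of_pow D hD m 3 (by simpa [pow_succ, Module.End.mul_apply] using h3)]
  norm_num [Finset.sum_range_succ, pow_succ, Module.End.mul_apply]


/-- Let `(h, e, f)` be an `sl₂`-triple in a Lie algebra `L` over a field of characteristic
zero such that `ad e` and `ad f` are nilpotent, and let
`θ = exp(ad e) ∘ exp(ad (−f)) ∘ exp(ad e)`.  If `x ∈ L` and `c ∈ K` satisfy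
`⁅x, e⁆ = c • e` and `⁅x, f⁆ = −c • f`, then `θ x = x − c • h`. -/
theorem weyl_element_on_cartan_element
    {K L : Type*} [Field K] [CharZero K] [LieRing L] [LieAlgebra K L]
    (h e f : L) (he : e ≠ 0) (hf : f ≠ 0)
    (hhe : ⁅h, e⁆ = (2 : K) • e) (hhf : ⁅h, f⁆ = (-2 : K) • f) (hef : ⁅e, f⁆ = h)
    (hnile : IsNilpotent (LieAlgebra.ad K L e)) (hnilf : IsNilpotent (LieAlgebra.ad K L f))
    (θ : Module.End K L)
    (hθ : θ = expEnd (LieAlgebra.ad K L e) * expEnd (LieAlgebra.ad K L (-f)) *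
      expEnd (LieAlgebra.ad K L e))
    (x : L) (c : K) (hxe : ⁅x, e⁆ = c • e) (hxf : ⁅x, f⁆ = -c • f) :
    θ x = x - c • h := by
  set A := LieAlgebra.ad K L e with hA
  set B := LieAlgebra.ad K L (-f) with hBdef
  have hBneg : B = -(LieAlgebra.ad K L f) := by ext y; simp [hBdef]
  have hnilB : IsNilpotent B := by rw [hBneg]; exact hnilf.neg
  have hAx : A x = -(c • e) := by
    rw [hA, LieAlgebra.ad_apply, ← lie_skew, hxe]
  have hAe : A e = 0 := by simp [hA]
  have hAh : A h = -((2:K) • e) := by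
    rw [hA, LieAlgebra.ad_apply, ← lie_skew, hhe]
  have hAf : A f = h := by rw [hA, LieAlgebra.ad_apply, hef]
  have hBx : B x = -c • f := by
    rw [hBdef, LieAlgebra.ad_apply, neg_lie, ← lie_skew, neg_neg, hxf]
  have hBe : B e = h := by
    rw [hBdef, LieAlgebra.ad_apply, neg_lie, ← lie_skew, neg_neg, hef]
  have hBh : B h = (-2:K) • f := by
    rw [hBdef, LieAlgebra.ad_apply, neg_lie, ← lie_skew, neg_neg, hhf]
  have hBf : B f = 0 := by simp [hBdef]
  -- step 1
  have s1 : expEnd A x = x - c • e := by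
    rw [expEnd_apply_two A hnile x (by rw [hAx]; simp [hAe]), hAx]
    module
  -- step 2
  have s2x : expEnd B x = x - c • f := by
    rw [expEnd_apply_two B hnilB x (by rw [hBx]; simp [hBf]), hBx]
    module
  have s2e : expEnd B e = e + h - f := by
    rw [expEnd_apply_three B hnilB e (by rw [hBe, hBh]; simp [hBf]), hBe, hBh]
    module
  -- step 3
  have s3e : expEnd A e = e := by
    rw [expEnd_apply_two A hnile e (by simp [hAe]), hAe, add_zero]
  have s3h : expEnd A h = h - (2:K) • e := by
    rw [expEnd_apply_two A hnile h (by rw [hAh]; simp [hAe]), hAh]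
    module
  have s3f : expEnd A f = f + h - e := by
    rw [expEnd_apply_three A hnile f (by rw [hAf, hAh]; simp [hAe]), hAf, hAh]
    module
  rw [hθ, Module.End.mul_apply, Module.End.mul_apply, s1, map_sub, map_smul, s2x, s2e]
  simp only [map_sub, map_add, map_smul, s1, s3e, s3h, s3f]
  module
end

section
/- Let K be an algebraically closed field of characteristic zero, L a finite-dimensional semisimple Lie algebra over K with nondegenerate Killing form, and H a splitting Cartan subalgebra of L. Let α be a root, e ∈ L_α and f ∈ L_{−α} elements such that (h,e,f) is an sl₂-triple with h = ⁅e,f⁆ ∈ H, and let θ = exp(ad e) ∘ exp(ad(−f)) ∘ exp(ad e) (ad(e) and ad(f) are nilpotent since e and f lie in root spaces). Then for every linear functional β on H, θ maps the root space L_β bijectively onto the root space L_{β − β(h)α}. -/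
/-- For a linear functional `α` on a Lie subalgebra `H` of `L`, the root space `L_α` is
`{x ∈ L : ⁅h, x⁆ = α h • x for all h ∈ H}`. -/
def rootSpace' {K L : Type*} [Field K] [LieRing L] [LieAlgebra K L]
    (H : LieSubalgebra K L) (α : Module.Dual K H) : Submodule K L :=
  ⨅ h : H, Module.End.eigenspace (LieAlgebra.ad K L (h : L)) (α h)

/-- `α` is a root of `(L, H)` if it is a nonzero functional with nonzero root space. -/
def IsRoot' {K L : Type*} [Field K] [LieRing L] [LieAlgebra K L]
    (H : LieSubalgebra K L) (α : Module.Dual K H) : Prop :=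
  α ≠ 0 ∧ rootSpace' H α ≠ ⊥

/-!
Exponentials of nilpotent inner derivations are Lie automorphisms, so `θ` is one. On `H` it acts
as the reflection `z ↦ z - α(z) h`: each exponential series truncates after two or three terms,
because `e` and `f` are eigenvectors of `ad H` and `⁅e, f⁆ = h`. A Lie automorphism restricting
to a linear automorphism `s` of `H` carries `L_γ` onto `L_{γ ∘ s⁻¹}`, and composing `β` with the
reflection gives `β - β(h) α`.
-/

open Finset LieAlgebra

section Exp

variable {K V : Type*} [Field K] [AddCommGroup V] [Module K V]

lemma expEnd_eq_exp [CharZero K] [Module ℚ V] {D : Module.End K V} (hD : IsNilpotent D) :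
    expEnd D = IsNilpotent.exp D := by
  rw [IsNilpotent.exp_eq_sum (pow_eq_zero_of_le (Nat.le_succ _) (pow_nilpotencyClass hD)), expEnd]
  refine sum_congr rfl fun n _ => ?_
  rw [← Rat.cast_smul_eq_qsmul K]
  push_cast
  rfl

lemma expEnd_apply_eq_sum {D : Module.End K V} (hD : IsNilpotent D) {v : V} {k : ℕ}
    (hk : (D ^ k) v = 0) : expEnd D v = ∑ n ∈ range k, (n.factorial : K)⁻¹ • (D ^ n) v := by
  have hvanish : ∀ n ≥ min k (nilpotencyClass D), (n.factorial : K)⁻¹ • (D ^ n) v = 0 := by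
    intro n hn
    rcases min_le_iff.mp hn with hkn | hcn
    · rw [Module.End.pow_map_zero_of_le hkn hk, smul_zero]
    · rw [pow_eq_zero_of_le hcn (pow_nilpotencyClass hD), LinearMap.zero_apply, smul_zero]
  simp only [expEnd, LinearMap.sum_apply, LinearMap.smul_apply]
  rw [eventually_constant_sum hvanish (by omega), eventually_constant_sum hvanish (min_le_left k _)]

end Exp

section ExpAd

variable {K L : Type*} [Field K] [LieRing L] [LieAlgebra K L]

lemma expEnd_ad_apply_of_lie_lie_eq_zero {x : L} (hx : IsNilpotent (ad K L x)) {y : L}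
    (hy : ⁅x, ⁅x, y⁆⁆ = 0) : expEnd (ad K L x) y = y + ⁅x, y⁆ := by
  rw [expEnd_apply_eq_sum hx (k := 2) (by simpa [pow_two] using hy)]
  simp [sum_range_succ]

lemma expEnd_ad_apply_of_lie_lie_lie_eq_zero {x : L} (hx : IsNilpotent (ad K L x)) {y : L}
    (hy : ⁅x, ⁅x, ⁅x, y⁆⁆⁆ = 0) :
    expEnd (ad K L x) y = y + ⁅x, y⁆ + (2 : K)⁻¹ • ⁅x, ⁅x, y⁆⁆ := by
  rw [expEnd_apply_eq_sum hx (k := 3) (by simpa [pow_succ] using hy)]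
  simp [sum_range_succ, pow_succ]

variable [CharZero K]

variable (K L) in
abbrev lieAlgebraRat : LieAlgebra ℚ L where
  toModule := Module.compHom L (algebraMap ℚ K)
  lie_smul q := lie_smul (algebraMap ℚ K q)

noncomputable def expAd (x : L) (hx : IsNilpotent (ad K L x)) : L ≃ₗ⁅K⁆ L :=
  letI := lieAlgebraRat K L
  LieDerivation.exp (LieDerivation.ad K L x) (by simpa using hx)

lemma expAd_apply {x : L} (hx : IsNilpotent (ad K L x)) (y : L) :
    expAd x hx y = expEnd (ad K L x) y := by
  let := lieAlgebraRat K L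
  rw [expAd, LieDerivation.exp_map_apply, LieDerivation.coe_ad_apply_eq_ad_apply,
    expEnd_eq_exp hx]

end ExpAd

section RootSpace

variable {K L : Type*} [Field K] [LieRing L] [LieAlgebra K L] {H : LieSubalgebra K L}

lemma mem_rootSpace'_iff {α : Module.Dual K H} {x : L} :
    x ∈ rootSpace' H α ↔ ∀ z : H, ⁅(z : L), x⁆ = α z • x := by
  simp only [rootSpace', Submodule.mem_iInf, Module.End.mem_eigenspace_iff, ad_apply]

lemma mem_rootSpace_of_mem_rootSpace' [LieRing.IsNilpotent H] {α : Module.Dual K H} {x : L}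
    (hx : x ∈ rootSpace' H α) : x ∈ rootSpace H α := by
  rw [rootSpace, LieModule.mem_genWeightSpace]
  exact fun z => ⟨1, by simp [mem_rootSpace'_iff.mp hx z]⟩

lemma LieEquiv.mapsTo_rootSpace' (Θ : L ≃ₗ⁅K⁆ L) (s : H →ₗ[K] H) (hs : ∀ z, Θ (s z) = z)
    (γ : Module.Dual K H) : Set.MapsTo Θ (rootSpace' H γ) (rootSpace' H (γ ∘ₗ s)) := by
  intro x hx
  rw [SetLike.mem_coe, mem_rootSpace'_iff] at hx ⊢
  intro z
  calc ⁅(z : L), Θ x⁆ = ⁅Θ (s z), Θ x⁆ := by rw [hs]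
    _ = Θ ⁅(s z : L), x⁆ := (Θ.map_lie _ _).symm
    _ = (γ ∘ₗ s) z • Θ x := by rw [hx, map_smul]; rfl

lemma LieEquiv.bijOn_rootSpace' (Θ : L ≃ₗ⁅K⁆ L) (s : H ≃ₗ[K] H) (hs : ∀ z : H, Θ z = s z)
    (γ : Module.Dual K H) :
    Set.BijOn Θ (rootSpace' H γ) (rootSpace' H (γ ∘ₗ (s.symm : H →ₗ[K] H))) := by
  refine Θ.toLinearEquiv.toEquiv.bijOn' (Θ.mapsTo_rootSpace' _ (fun z => by simp [hs]) γ) ?_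
  have := Θ.symm.mapsTo_rootSpace' s (fun z => by simp [← hs]) (γ ∘ₗ (s.symm : H →ₗ[K] H))
  simp only [LinearMap.comp_assoc, LinearEquiv.symm_comp, LinearMap.comp_id] at this
  exact this

end RootSpace

section Weyl

variable {K L : Type*} [Field K] [CharZero K] [LieRing L] [LieAlgebra K L] {H : LieSubalgebra K L}
  {α : Module.Dual K H} {e f : L} {h : H}

lemma expEnd_ad_expEnd_ad_neg_expEnd_ad_apply (he : e ∈ rootSpace' H α)
    (hf : f ∈ rootSpace' H (-α)) (hef : ⁅e, f⁆ = h) (hαh : α h = 2) (hne : IsNilpotent (ad K L e))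
    (hnf : IsNilpotent (ad K L (-f))) (z : H) :
    expEnd (ad K L e) (expEnd (ad K L (-f)) (expEnd (ad K L e) z)) = z - α z • (h : L) := by
  have hez : ⁅e, (z : L)⁆ = -(α z • e) := by rw [← lie_skew, mem_rootSpace'_iff.mp he]
  have hfz : ⁅f, (z : L)⁆ = α z • f := by
    rw [← lie_skew, mem_rootSpace'_iff.mp hf, LinearMap.neg_apply, neg_smul, neg_neg]
  have heh : ⁅e, (h : L)⁆ = -((2 : K) • e) := by rw [← lie_skew, mem_rootSpace'_iff.mp he, hαh]
  have hfh : ⁅f, (h : L)⁆ = (2 : K) • f := by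
    rw [← lie_skew, mem_rootSpace'_iff.mp hf, LinearMap.neg_apply, hαh, neg_smul, neg_neg]
  have hfe : ⁅f, e⁆ = -(h : L) := by rw [← lie_skew, hef]
  have hexp_e_z : expEnd (ad K L e) z = z - α z • e := by
    rw [expEnd_ad_apply_of_lie_lie_eq_zero hne (by simp [hez]), hez, sub_eq_add_neg]
  have hexp_neg_f : expEnd (ad K L (-f)) (z - α z • e) = z - α z • e - α z • (h : L) := by
    rw [expEnd_ad_apply_of_lie_lie_lie_eq_zero hnf (by simp [hfz, hfe, hfh])]
    simp only [neg_lie, lie_sub, lie_smul, hfz, hfe, hfh, lie_neg, lie_self]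
    module
  have hexp_e : expEnd (ad K L e) (z - α z • e - α z • (h : L)) = z - α z • (h : L) := by
    rw [expEnd_ad_apply_of_lie_lie_eq_zero hne (by simp [hez, heh])]
    simp only [lie_sub, lie_smul, hez, heh, lie_self]
    module
  rw [hexp_e_z, hexp_neg_f, hexp_e]

end Weyl

lemma Module.Dual.comp_reflection {R M : Type*} [CommRing R] [AddCommGroup M] [Module R M]
    {x : M} {f : Module.Dual R M} (hf : f x = 2) (g : Module.Dual R M) :
    g ∘ₗ (Module.reflection hf : M →ₗ[R] M) = g - g x • f := by
  ext y
  simp [Module.reflection_apply, mul_comm]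

theorem weyl_element_maps_root_spaces_general
    {K L : Type*} [Field K] [IsAlgClosed K] [CharZero K]
    [LieRing L] [LieAlgebra K L] [FiniteDimensional K L]
    (H : LieSubalgebra K L) [H.IsCartanSubalgebra]
    (α : Module.Dual K H)
    (e f : L) (hmeme : e ∈ rootSpace' H α) (hmemf : f ∈ rootSpace' H (-α))
    (h : H) (hef : ⁅e, f⁆ = (h : L)) (he : e ≠ 0)
    (hhe : ⁅(h : L), e⁆ = (2 : K) • e)
    (θ : Module.End K L)
    (hθ : θ = expEnd (LieAlgebra.ad K L e) * expEnd (LieAlgebra.ad K L (-f)) *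
      expEnd (LieAlgebra.ad K L e))
    (β : Module.Dual K H) :
    Set.BijOn θ (rootSpace' H β) (rootSpace' H (β - β h • α)) := by
  have hαh : α h = 2 :=
    smul_left_injective K he ((mem_rootSpace'_iff.mp hmeme h).symm.trans hhe)
  have hα : α ≠ 0 := by
    rintro rfl
    simp at hαh
  have hne : IsNilpotent (ad K L e) :=
    isNilpotent_ad_of_mem_rootSpace H (by simpa using hα) (mem_rootSpace_of_mem_rootSpace' hmeme)
  have hnf : IsNilpotent (ad K L (-f)) := by
    rw [map_neg]
    exact (isNilpotent_ad_of_mem_rootSpace H (by simpa using hα)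
      (mem_rootSpace_of_mem_rootSpace' hmemf)).neg
  let Θ := (expAd e hne).trans ((expAd (-f) hnf).trans (expAd e hne))
  have hθΘ : ⇑θ = Θ := by
    ext x
    simp [hθ, Θ, expAd_apply]
  have hΘ (z : H) : Θ z = Module.reflection hαh z := by
    simp only [Θ, LieEquiv.trans_apply, expAd_apply, Module.reflection_apply,
      expEnd_ad_expEnd_ad_neg_expEnd_ad_apply hmeme hmemf hef hαh hne hnf,
      AddSubgroupClass.coe_sub, SetLike.val_smul]
  rw [hθΘ, ← Module.Dual.comp_reflection hαh, ← Module.reflection_symm hαh]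
  exact Θ.bijOn_rootSpace' _ hΘ β

/-- Let `L` be a finite-dimensional semisimple Lie algebra over an algebraically closed
field of characteristic zero (nondegenerate Killing form), `H` a (splitting) Cartan
subalgebra, `α` a root, `e ∈ L_α`, `f ∈ L_{−α}` with `(h, e, f)` an `sl₂`-triple where
`h = ⁅e, f⁆ ∈ H`, and `θ = exp(ad e) ∘ exp(ad (−f)) ∘ exp(ad e)`.  Then for every linear
functional `β` on `H`, `θ` maps `L_β` bijectively onto `L_{β − β(h)α}`. -/
theorem weyl_element_maps_root_spaces
    {K L : Type*} [Field K] [IsAlgClosed K] [CharZero K]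
    [LieRing L] [LieAlgebra K L] [FiniteDimensional K L]
    [LieAlgebra.IsSemisimple K L] [LieAlgebra.IsKilling K L]
    (H : LieSubalgebra K L) [H.IsCartanSubalgebra]
    (α : Module.Dual K H) (hroot : IsRoot' H α)
    (e f : L) (hmeme : e ∈ rootSpace' H α) (hmemf : f ∈ rootSpace' H (-α))
    (h : H) (hef : ⁅e, f⁆ = (h : L)) (he : e ≠ 0) (hf : f ≠ 0)
    (hhe : ⁅(h : L), e⁆ = (2 : K) • e) (hhf : ⁅(h : L), f⁆ = (-2 : K) • f)
    (θ : Module.End K L)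
    (hθ : θ = expEnd (LieAlgebra.ad K L e) * expEnd (LieAlgebra.ad K L (-f)) *
      expEnd (LieAlgebra.ad K L e))
    (β : Module.Dual K H) :
    Set.BijOn θ (rootSpace' H β) (rootSpace' H (β - β h • α)) :=
  weyl_element_maps_root_spaces_general H α e f hmeme hmemf h hef he hhe θ hθ β
end

section
/- Let K be an algebraically closed field of characteristic zero, L a finite-dimensional semisimple Lie algebra over K with nondegenerate Killing form, and H a splitting Cartan subalgebra of L. Let α be a root with coroot h_α, and let e ∈ L_α, f ∈ L_{−α} be such that (h_α, e, f) is an sl₂-triple. Let M be a finite-dimensional L-module on which e and f act nilpotently. Then for every linear functional λ on H, the weight spaces M_λ and M_{λ − λ(h_α)α} have the same dimension. In particular, the set of weights of M is invariant under the Weyl reflection λ ↦ λ − λ(h_α)α. -/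
/-- For a linear functional `ν` on a Lie subalgebra `H` of `L` and an `L`-module `M`,
the weight space `M_ν` is `{m ∈ M : h • m = ν h • m for all h ∈ H}`. -/
def weightSpace' {K L : Type*} [Field K] [LieRing L] [LieAlgebra K L]
    (H : LieSubalgebra K L) (M : Type*) [AddCommGroup M] [Module K M]
    [LieRingModule L M] [LieModule K L M] (ν : Module.Dual K H) : Submodule K M :=
  ⨅ h : H, Module.End.eigenspace (LieModule.toEnd K L M (h : L)) (ν h)

theorem Module.End.exp_apply_of_pow_three_apply_eq_zero {V : Type*} [AddCommGroup V] [Module ℚ V]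
    {D : Module.End ℚ V} (hD : IsNilpotent D) {v : V} (hv : (D ^ 3) v = 0) :
    IsNilpotent.exp D v = v + D v + (2 : ℚ)⁻¹ • D (D v) := by
  simpa [Finset.sum_range_succ, sq] using IsNilpotent.exp_smul_eq_sum (k := 3) hv hD

namespace IsNilpotent

open LieAlgebra

attribute [local instance] LieRing.ofAssociativeRing

variable {A : Type*} [Ring A] [Algebra ℚ A] {a : A}

theorem exp_mul_eq_exp_ad_mul (ha : IsNilpotent a) (T : A) :
    exp a * T = exp (ad ℚ A a) T * exp a := by
  have hR : IsNilpotent (LinearMap.mulRight ℚ a) := by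
    obtain ⟨n, hn⟩ := ha
    exact ⟨n, by rw [LinearMap.pow_mulRight, hn, LinearMap.mulRight_zero_eq_zero]⟩
  have hcomm : Commute (LinearMap.mulRight ℚ a) (ad ℚ A a) := by
    rw [ad_eq_lmul_left_sub_lmul_right]
    exact ((LinearMap.commute_mulLeft_right a a).symm).sub_right (Commute.refl _)
  have hsplit : Algebra.lmul ℚ A a = LinearMap.mulRight ℚ a + ad ℚ A a := by
    rw [ad_eq_lmul_left_sub_lmul_right, Pi.sub_apply, add_sub_cancel]; rfl
  have hexpR : exp (LinearMap.mulRight ℚ a) = LinearMap.mulRight ℚ (exp a) := by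
    obtain ⟨n, hn⟩ := ha
    have hn' : LinearMap.mulRight ℚ a ^ n = 0 := by
      rw [LinearMap.pow_mulRight, hn, LinearMap.mulRight_zero_eq_zero]
    ext x
    simp [exp_eq_sum hn, exp_eq_sum hn', LinearMap.pow_mulRight, Finset.mul_sum]
  calc exp a * T = exp (Algebra.lmul ℚ A a) T := by rw [← map_exp ha]; rfl
    _ = exp (LinearMap.mulRight ℚ a) (exp (ad ℚ A a) T) := by
        rw [hsplit, exp_add_of_commute hcomm hR (ad_nilpotent_of_nilpotent ha)]; rfl
    _ = exp (ad ℚ A a) T * exp a := by rw [hexpR]; rfl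

theorem exp_mul_eq_of_lie_lie_lie_eq_zero (ha : IsNilpotent a) {T : A}
    (hT : ⁅a, ⁅a, ⁅a, T⁆⁆⁆ = 0) :
    exp a * T = (T + ⁅a, T⁆ + (2 : ℚ)⁻¹ • ⁅a, ⁅a, T⁆⁆) * exp a := by
  rw [exp_mul_eq_exp_ad_mul ha,
    Module.End.exp_apply_of_pow_three_apply_eq_zero (ad_nilpotent_of_nilpotent ha)]
  · simp only [ad_apply]
  · rw [_root_.pow_succ, pow_two]
    simpa only [Module.End.mul_apply, ad_apply] using hT

end IsNilpotent

section WeylElement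

open LieModule IsNilpotent

variable {K L : Type*} (M : Type*) [Field K] [LieRing L] [LieAlgebra K L]
  [AddCommGroup M] [Module K M] [Module ℚ M] [LieRingModule L M] [LieModule K L M]

theorem exp_toEnd_mul_toEnd [CharZero K] {e : L} (he : IsNilpotent (toEnd K L M e)) {x : L}
    (hx : ⁅e, ⁅e, ⁅e, x⁆⁆⁆ = 0) :
    exp (toEnd K L M e) * toEnd K L M x =
      toEnd K L M (x + ⁅e, x⁆ + (2 : K)⁻¹ • ⁅e, ⁅e, x⁆⁆) * exp (toEnd K L M e) := by
  rw [he.exp_mul_eq_of_lie_lie_lie_eq_zero (by simp only [← LieHom.map_lie, hx, map_zero])]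
  simp [← Rat.cast_smul_eq_qsmul K]

variable (K) in
noncomputable def weylElement (e f : L) : Module.End K M :=
  exp (toEnd K L M e) * exp (toEnd K L M (-f)) * exp (toEnd K L M e)

theorem isUnit_weylElement {e f : L} (he : IsNilpotent (toEnd K L M e))
    (hf : IsNilpotent (toEnd K L M f)) : IsUnit (weylElement K M e f) := by
  have hf' : IsNilpotent (toEnd K L M (-f)) := by rw [map_neg]; exact hf.neg
  exact ((isUnit_exp he).mul (isUnit_exp hf')).mul (isUnit_exp he)

theorem weylElement_mul_toEnd [CharZero K] {e f h x : L} {c : K} (hef : ⁅e, f⁆ = h)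
    (hhe : ⁅h, e⁆ = (2 : K) • e) (hhf : ⁅h, f⁆ = (-2 : K) • f)
    (hxe : ⁅x, e⁆ = c • e) (hxf : ⁅x, f⁆ = -c • f)
    (he : IsNilpotent (toEnd K L M e)) (hf : IsNilpotent (toEnd K L M f)) :
    weylElement K M e f * toEnd K L M x = toEnd K L M (x - c • h) * weylElement K M e f := by
  have hf' : IsNilpotent (toEnd K L M (-f)) := by rw [map_neg]; exact hf.neg
  have hex : ⁅e, x⁆ = -c • e := by rw [← lie_skew, hxe, neg_smul]
  have hfx : ⁅f, x⁆ = c • f := by rw [← lie_skew, hxf, neg_smul, neg_neg]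
  have hfe : ⁅f, e⁆ = -h := by rw [← lie_skew, hef]
  have heh : ⁅e, h⁆ = (-2 : K) • e := by rw [← lie_skew, hhe, neg_smul]
  have hfh : ⁅f, h⁆ = (2 : K) • f := by rw [← lie_skew, hhf, neg_smul, neg_neg]
  have conj_e : exp (toEnd K L M e) * toEnd K L M x =
      toEnd K L M (x - c • e) * exp (toEnd K L M e) := by
    rw [exp_toEnd_mul_toEnd M he (by simp [hex])]
    congr 2
    simp only [hex, neg_smul, lie_neg, lie_smul, lie_self, smul_zero, neg_zero, add_zero]
    module
  have conj_f : exp (toEnd K L M (-f)) * toEnd K L M (x - c • e) =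
      toEnd K L M (x - c • e - c • h) * exp (toEnd K L M (-f)) := by
    rw [exp_toEnd_mul_toEnd M hf' (by simp [hfx, hfe, hfh])]
    congr 2
    simp only [lie_sub, neg_lie, hfx, lie_smul, hfe, neg_neg, lie_neg, lie_self, neg_zero,
      smul_zero, hfh, smul_neg, smul_smul, sub_neg_eq_add, zero_add]
    module
  have conj_e' : exp (toEnd K L M e) * toEnd K L M (x - c • e - c • h) =
      toEnd K L M (x - c • h) * exp (toEnd K L M e) := by
    rw [exp_toEnd_mul_toEnd M he (by simp [hex, heh])]
    congr 2
    simp only [lie_sub, hex, neg_smul, lie_smul, lie_self, smul_zero, sub_zero, heh, smul_neg,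
      smul_smul, sub_neg_eq_add, lie_add, lie_neg, neg_zero, add_zero]
    module
  simp only [weylElement, mul_assoc, conj_e]
  rw [← mul_assoc _ (toEnd K L M (x - c • e)), conj_f, mul_assoc,
    ← mul_assoc _ (toEnd K L M (x - c • e - c • h)), conj_e', mul_assoc]

end WeylElement

section WeightSpace

variable {K L : Type*} [Field K] [LieRing L] [LieAlgebra K L] {H : LieSubalgebra K L}
  {M : Type*} [AddCommGroup M] [Module K M] [LieRingModule L M] [LieModule K L M]

theorem lie_eq_smul_of_mem_rootSpace' {α : Module.Dual K H} {x : L} (hx : x ∈ rootSpace' H α)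
    (h : H) : ⁅(h : L), x⁆ = α h • x := by
  simpa using Module.End.mem_eigenspace_iff.mp ((Submodule.mem_iInf _).mp hx h)

theorem mem_weightSpace'_iff {ν : Module.Dual K H} {m : M} :
    m ∈ weightSpace' H M ν ↔ ∀ h : H, ⁅(h : L), m⁆ = ν h • m := by
  simp [weightSpace', Submodule.mem_iInf]

theorem apply_mem_weightSpace'_comp {s : H →ₗ[K] H} {u : M →ₗ[K] M}
    (hu : ∀ (h : H) (m : M), u ⁅(s h : L), m⁆ = ⁅(h : L), u m⁆) {ν : Module.Dual K H} {m : M}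
    (hm : m ∈ weightSpace' H M ν) : u m ∈ weightSpace' H M (ν ∘ₗ s) := by
  rw [mem_weightSpace'_iff] at hm ⊢
  intro h
  rw [← hu, hm, map_smul, LinearMap.comp_apply]

theorem map_weightSpace'_eq_comp {s : H →ₗ[K] H} (hs : Function.Involutive s) (u : M ≃ₗ[K] M)
    (hu : ∀ (h : H) (m : M), u ⁅(s h : L), m⁆ = ⁅(h : L), u m⁆) (ν : Module.Dual K H) :
    (weightSpace' H M ν).map (u : M →ₗ[K] M) = weightSpace' H M (ν ∘ₗ s) := by
  have hu_symm : ∀ (h : H) (m : M), u.symm ⁅(s h : L), m⁆ = ⁅(h : L), u.symm m⁆ := by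
    intro h m
    have := hu (s h) (u.symm m)
    rw [hs h, u.apply_symm_apply] at this
    rw [← this, u.symm_apply_apply]
  refine le_antisymm
    (Submodule.map_le_iff_le_comap.mpr fun m hm => apply_mem_weightSpace'_comp hu hm)
    fun m hm => ⟨u.symm m, ?_, u.apply_symm_apply m⟩
  have := apply_mem_weightSpace'_comp (u := u.symm.toLinearMap) hu_symm hm
  rwa [show (ν ∘ₗ s) ∘ₗ s = ν from LinearMap.ext fun h => congrArg ν (hs h)] at this

end WeightSpace

theorem weight_space_dimensions_weyl_invariant_general
    {K L : Type*} [Field K] [CharZero K]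
    [LieRing L] [LieAlgebra K L]
    (H : LieSubalgebra K L)
    (α : Module.Dual K H)
    (hα : H) (hcoroot : α hα = 2)
    (e f : L) (hmeme : e ∈ rootSpace' H α) (hmemf : f ∈ rootSpace' H (-α))
    (hef : ⁅e, f⁆ = (hα : L))
    (hhe : ⁅(hα : L), e⁆ = (2 : K) • e) (hhf : ⁅(hα : L), f⁆ = (-2 : K) • f)
    (M : Type*) [AddCommGroup M] [Module K M] [LieRingModule L M] [LieModule K L M]
    (hnile : IsNilpotent (LieModule.toEnd K L M e))
    (hnilf : IsNilpotent (LieModule.toEnd K L M f))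
    (lam : Module.Dual K H) :
    Module.finrank K (weightSpace' H M lam) =
        Module.finrank K (weightSpace' H M (lam - lam hα • α)) ∧
      (weightSpace' H M lam ≠ ⊥ → weightSpace' H M (lam - lam hα • α) ≠ ⊥) := by
  -- `IsNilpotent.exp` needs a `ℚ`-module structure; any two agree, so take the one induced by `K`.
  let _ : Module ℚ M := Module.compHom M (algebraMap ℚ K)
  set s := Module.reflection hcoroot
  have hweyl (h : H) (m : M) :
      weylElement K M e f ⁅(s h : L), m⁆ = ⁅(h : L), weylElement K M e f m⁆ := by
    have hconj := weylElement_mul_toEnd M hef hhe hhf (lie_eq_smul_of_mem_rootSpace' hmeme (s h))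
      (by simpa using lie_eq_smul_of_mem_rootSpace' hmemf (s h)) hnile hnilf
    have hs : (s h : L) - α (s h) • (hα : L) = h := by
      conv_rhs => rw [← Module.involutive_reflection hcoroot h]
      rw [Module.reflection_apply]; rfl
    simpa [hs] using congr($hconj m)
  let u := LinearEquiv.ofBijective (weylElement K M e f)
    ((Module.End.isUnit_iff _).mp (isUnit_weylElement M hnile hnilf))
  have hmap := map_weightSpace'_eq_comp (Module.involutive_reflection hcoroot) u hweyl lam
  have hrefl : lam ∘ₗ (s : H →ₗ[K] H) = lam - lam hα • α := by
    ext h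
    simp only [LinearMap.comp_apply, LinearEquiv.coe_coe, Module.reflection_apply, map_sub,
      map_smul, smul_eq_mul, LinearMap.sub_apply, LinearMap.smul_apply, s]
    ring
  rw [hrefl] at hmap
  rw [← hmap, u.finrank_map_eq]
  exact ⟨rfl, by simp⟩

/-- Let `L` be a finite-dimensional semisimple Lie algebra over an algebraically closed
field of characteristic zero (nondegenerate Killing form), `H` a (splitting) Cartan
subalgebra, `α` a root with coroot `h_α`, and `e ∈ L_α`, `f ∈ L_{−α}` with `(h_α, e, f)`
an `sl₂`-triple.  Let `M` be a finite-dimensional `L`-module on which `e` and `f` act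
nilpotently.  Then for every linear functional `λ` on `H` the weight spaces `M_λ` and
`M_{λ − λ(h_α)α}` have the same dimension; in particular the set of weights of `M` is
invariant under the Weyl reflection `λ ↦ λ − λ(h_α)α`. -/
theorem weight_space_dimensions_weyl_invariant
    {K L : Type*} [Field K] [IsAlgClosed K] [CharZero K]
    [LieRing L] [LieAlgebra K L] [FiniteDimensional K L]
    [LieAlgebra.IsSemisimple K L] [LieAlgebra.IsKilling K L]
    (H : LieSubalgebra K L) [H.IsCartanSubalgebra]
    (α : Module.Dual K H) (hroot : IsRoot' H α)
    (hα : H) (hcoroot : α hα = 2)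
    (e f : L) (hmeme : e ∈ rootSpace' H α) (hmemf : f ∈ rootSpace' H (-α))
    (hef : ⁅e, f⁆ = (hα : L)) (he : e ≠ 0) (hf : f ≠ 0)
    (hhe : ⁅(hα : L), e⁆ = (2 : K) • e) (hhf : ⁅(hα : L), f⁆ = (-2 : K) • f)
    (M : Type*) [AddCommGroup M] [Module K M] [LieRingModule L M] [LieModule K L M]
    [FiniteDimensional K M]
    (hnile : IsNilpotent (LieModule.toEnd K L M e))
    (hnilf : IsNilpotent (LieModule.toEnd K L M f))
    (lam : Module.Dual K H) :
    Module.finrank K (weightSpace' H M lam) =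
        Module.finrank K (weightSpace' H M (lam - lam hα • α)) ∧
      (weightSpace' H M lam ≠ ⊥ → weightSpace' H M (lam - lam hα • α) ≠ ⊥) :=
  weight_space_dimensions_weyl_invariant_general H α hα hcoroot e f hmeme hmemf hef hhe hhf M hnile
    hnilf lam
end

section
/- Let K be an algebraically closed field of characteristic zero, L a finite-dimensional semisimple Lie algebra over K with nondegenerate Killing form, and H a splitting Cartan subalgebra of L. Let α be a root with coroot h_α, let M be a finite-dimensional L-module, and let v ∈ M be a nonzero weight vector of weight λ such that x·v = 0 for every x ∈ L_α. Then the following are equivalent: (i) y·v = 0 for every y ∈ L_{−α}; (ii) λ(h_α) = 0. -/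
lemma mem_rootSpace'_iff_aux {K L : Type*} [Field K] [LieRing L] [LieAlgebra K L]
    (H : LieSubalgebra K L) (α : Module.Dual K H) (x : L) :
    x ∈ (⨅ h : H, Module.End.eigenspace (LieAlgebra.ad K L (h : L)) (α h)) ↔
      ∀ h : H, ⁅(h : L), x⁆ = α h • x := by
  simp [Submodule.mem_iInf, Module.End.mem_eigenspace_iff, LieAlgebra.ad_apply]

lemma rootSpace'_le_rootSpace_aux {K L : Type*} [Field K] [LieRing L] [LieAlgebra K L]
    (H : LieSubalgebra K L) [H.IsCartanSubalgebra] (α : Module.Dual K H) (x : L)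
    (hx : ∀ h : H, ⁅(h : L), x⁆ = α h • x) :
    x ∈ LieAlgebra.rootSpace H (α : H → K) := by
  rw [LieModule.mem_genWeightSpace]
  intro h
  exact ⟨1, by simp [LieModule.toEnd_apply_apply, hx h]⟩


/-- Let `L` be a finite-dimensional semisimple Lie algebra over an algebraically closed
field of characteristic zero (nondegenerate Killing form), `H` a (splitting) Cartan
subalgebra, `α` a root with coroot `h_α` (the element of `⁅L_α, L_{−α}⁆ ⊆ H` with
`α(h_α) = 2`), `M` a finite-dimensional `L`-module, and `v ∈ M` a nonzero weight vector
of weight `λ` annihilated by every `x ∈ L_α`.  Then `v` is annihilated by every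
`y ∈ L_{−α}` if and only if `λ(h_α) = 0`. -/
theorem annihilated_by_lowering_iff_coroot_eval_zero
    {K L : Type*} [Field K] [IsAlgClosed K] [CharZero K]
    [LieRing L] [LieAlgebra K L] [FiniteDimensional K L]
    [LieAlgebra.IsSemisimple K L] [LieAlgebra.IsKilling K L]
    (H : LieSubalgebra K L) [H.IsCartanSubalgebra]
    (α : Module.Dual K H) (hroot : IsRoot' H α)
    (hα : H) (hcoroot : α hα = 2)
    (hbracket : ∃ e ∈ rootSpace' H α, ∃ f ∈ rootSpace' H (-α), ⁅e, f⁆ = (hα : L))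
    (M : Type*) [AddCommGroup M] [Module K M] [LieRingModule L M] [LieModule K L M]
    [FiniteDimensional K M]
    (v : M) (hv : v ≠ 0) (lam : Module.Dual K H)
    (hwt : ∀ h : H, ⁅(h : L), v⁆ = lam h • v)
    (hann : ∀ x ∈ rootSpace' H α, ⁅x, v⁆ = 0) :
    (∀ y ∈ rootSpace' H (-α), ⁅y, v⁆ = 0) ↔ lam hα = 0 := by
  obtain ⟨e, he, f, hf, hef⟩ := hbracket
  rw [rootSpace', mem_rootSpace'_iff_aux] at he hf
  constructor
  · intro h
    have hfv : ⁅f, v⁆ = 0 := h f (by rwa [rootSpace', mem_rootSpace'_iff_aux])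
    have hev : ⁅e, v⁆ = 0 := hann e (by rwa [rootSpace', mem_rootSpace'_iff_aux])
    have h0 : ⁅(hα : L), v⁆ = 0 := by
      rw [← hef, lie_lie, hfv, hev, lie_zero, lie_zero, sub_zero]
    rw [hwt hα] at h0
    exact (smul_eq_zero.mp h0).resolve_right hv
  · intro hlam y hy
    rw [rootSpace', mem_rootSpace'_iff_aux] at hy
    -- the sl2 triple
    have hαL : (hα : L) ≠ 0 := by
      intro h0
      have : hα = 0 := by exact_mod_cast h0
      rw [this, map_zero] at hcoroot
      exact two_ne_zero hcoroot.symm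
    have t : IsSl2Triple (hα : L) e f := by
      refine ⟨hαL, hef, ?_, ?_⟩
      · rw [he hα, hcoroot, two_smul, two_smul]
      · rw [hf hα, LinearMap.neg_apply, hcoroot, neg_smul, two_smul, two_smul]
    have P : t.HasPrimitiveVectorWith v (lam hα) :=
      ⟨hv, hwt hα, hann e (by rwa [rootSpace', mem_rootSpace'_iff_aux])⟩
    have hfv : ⁅f, v⁆ = 0 := by
      have := P.pow_toEnd_f_eq_zero_of_eq_nat (n := 0) (by simpa using hlam)
      simpa [LieModule.toEnd_apply_apply] using this
    -- one-dimensionality of the root space for -α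
    have hfL : f ≠ 0 := t.f_ne_zero
    have hfmem : f ∈ LieAlgebra.rootSpace H ((-α : Module.Dual K H) : H → K) :=
      rootSpace'_le_rootSpace_aux H (-α) f hf
    have hymem : y ∈ LieAlgebra.rootSpace H ((-α : Module.Dual K H) : H → K) :=
      rootSpace'_le_rootSpace_aux H (-α) y hy
    set W : LieModule.Weight K H L :=
      ⟨((-α : Module.Dual K H) : H → K), by
        intro hbot
        rw [eq_bot_iff] at hbot
        exact hfL (by simpa using hbot hfmem)⟩ with hW
    have hWnz : W.IsNonZero := by
      intro h0
      have h0' : (W : H → K) hα = 0 := by rw [h0]; rfl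
      have : (-α : Module.Dual K H) hα = 0 := h0'
      rw [LinearMap.neg_apply, hcoroot] at this
      exact two_ne_zero (neg_eq_zero.mp this)
    have h1 : Module.finrank K (LieAlgebra.rootSpace H (W : H → K)) = 1 :=
      LieAlgebra.IsKilling.finrank_rootSpace_eq_one W hWnz
    have hfV : (⟨f, hfmem⟩ : LieAlgebra.rootSpace H (W : H → K)) ≠ 0 := by
      intro h0
      exact hfL (by simpa using congrArg Subtype.val h0)
    have hspan := (finrank_eq_one_iff_of_nonzero
        (⟨f, hfmem⟩ : LieAlgebra.rootSpace H (W : H → K)) hfV).mp h1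
    have hmem : (⟨y, hymem⟩ : LieAlgebra.rootSpace H (W : H → K)) ∈
        Submodule.span K {(⟨f, hfmem⟩ : LieAlgebra.rootSpace H (W : H → K))} := by
      rw [hspan]; exact Submodule.mem_top
    obtain ⟨c, hc⟩ := Submodule.mem_span_singleton.mp hmem
    have hyf : y = c • f := by
      have := congrArg Subtype.val hc
      simpa using this.symm
    rw [hyf, smul_lie, hfv, smul_zero]
end

section
/- Let K be an algebraically closed field of characteristic zero, L a finite-dimensional semisimple Lie algebra over K with nondegenerate Killing form κ, and H a splitting Cartan subalgebra of L. Let M be an L-module and v ∈ M a nonzero weight vector of weight λ, and let h_λ ∈ H be the unique element with κ(h_λ, x) = λ(x) for all x ∈ H. If α is a root such that x·v = 0 for every x ∈ L_α and y·v = 0 for every y ∈ L_{−α}, then ⁅h_λ, x⁆ = 0 for every x ∈ L_α. -/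
lemma mem_rootSpace'_iff_s9 {K L : Type*} [Field K] [IsAlgClosed K] [CharZero K]
    [LieRing L] [LieAlgebra K L] [FiniteDimensional K L] [LieAlgebra.IsKilling K L]
    (H : LieSubalgebra K L) [H.IsCartanSubalgebra] (α : Module.Dual K H) (x : L) :
    x ∈ rootSpace' H α ↔ x ∈ LieAlgebra.rootSpace H ⇑α := by
  constructor
  · intro hx
    rw [LieModule.mem_genWeightSpace]
    intro h
    have := Module.End.mem_eigenspace_iff.mp ((Submodule.mem_iInf _).mp hx h)
    refine ⟨1, ?_⟩
    simp only [pow_one, LinearMap.sub_apply, LieModule.toEnd_apply_apply,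
      LinearMap.smul_apply, Module.End.one_apply, sub_eq_zero]
    simpa using this
  · intro hx
    refine (Submodule.mem_iInf _).mpr fun h => ?_
    rw [Module.End.mem_eigenspace_iff]
    simpa using LieAlgebra.IsKilling.lie_eq_smul_of_mem_rootSpace hx h

/-- Let `L` be a finite-dimensional semisimple Lie algebra over an algebraically closed
field of characteristic zero with nondegenerate Killing form `κ`, `H` a (splitting)
Cartan subalgebra, `M` an `L`-module and `v ∈ M` a nonzero weight vector of weight `λ`,
and `h_λ ∈ H` the unique element with `κ(h_λ, x) = λ(x)` for all `x ∈ H`.  If `α` is a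
root such that both `L_α` and `L_{−α}` annihilate `v`, then `⁅h_λ, x⁆ = 0` for all
`x ∈ L_α`. -/
theorem killing_dual_commutes_with_annihilating_root_space
    {K L : Type*} [Field K] [IsAlgClosed K] [CharZero K]
    [LieRing L] [LieAlgebra K L] [FiniteDimensional K L]
    [LieAlgebra.IsSemisimple K L] [LieAlgebra.IsKilling K L]
    (H : LieSubalgebra K L) [H.IsCartanSubalgebra]
    (M : Type*) [AddCommGroup M] [Module K M] [LieRingModule L M] [LieModule K L M]
    (v : M) (hv : v ≠ 0) (lam : Module.Dual K H)
    (hwt : ∀ h : H, ⁅(h : L), v⁆ = lam h • v)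
    (hlam : H) (hdual : ∀ x : H, killingForm K L (hlam : L) (x : L) = lam x)
    (α : Module.Dual K H) (hroot : IsRoot' H α)
    (hannp : ∀ x ∈ rootSpace' H α, ⁅x, v⁆ = 0)
    (hannm : ∀ y ∈ rootSpace' H (-α), ⁅y, v⁆ = 0) :
    ∀ x ∈ rootSpace' H α, ⁅(hlam : L), x⁆ = 0 := by
  intro x hx
  have hxeq : ⁅(hlam : L), x⁆ = α hlam • x := by
    simpa using Module.End.mem_eigenspace_iff.mp ((Submodule.mem_iInf _).mp hx hlam)
  suffices h0 : α hlam = 0 by rw [hxeq, h0, zero_smul]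
  obtain ⟨hα0, hαne⟩ := hroot
  obtain ⟨e, he, he0⟩ := Submodule.exists_mem_ne_zero_of_ne_bot hαne
  have heα : e ∈ LieAlgebra.rootSpace H ⇑α := (mem_rootSpace'_iff_s9 H α e).mp he
  have hW : LieModule.genWeightSpace L ⇑α ≠ ⊥ := by
    intro h
    exact he0 (by simpa [h] using heα)
  set W : LieModule.Weight K H L := ⟨⇑α, hW⟩ with hWdef
  obtain ⟨f, hfα, hf⟩ : ∃ f ∈ LieAlgebra.rootSpace H (-⇑α), killingForm K L e f ≠ 0 := by
    by_contra h
    push_neg at h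
    exact he0 (by simpa [LieAlgebra.IsKilling.ker_killingForm_eq_bot] using
      LieAlgebra.mem_ker_killingForm_of_mem_rootSpace_of_forall_rootSpace_neg K L H heα h)
  set hA : H := (LieAlgebra.IsKilling.cartanEquivDual H).symm W with hAdef
  have hlie : ⁅e, f⁆ = killingForm K L e f • (hA : L) :=
    LieAlgebra.IsKilling.lie_eq_killingForm_smul_of_mem_rootSpace_of_mem_rootSpace_neg
      (α := W) heα hfα
  have hfv : ⁅f, v⁆ = 0 := hannm f ((mem_rootSpace'_iff_s9 H (-α) f).mpr hfα)
  have hev : ⁅e, v⁆ = 0 := hannp e he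
  have hbr : ⁅⁅e, f⁆, v⁆ = 0 := by
    rw [lie_lie, hfv, hev, lie_zero, lie_zero, sub_zero]
  rw [hlie, smul_lie, smul_eq_zero] at hbr
  have hAv : ⁅(hA : L), v⁆ = 0 := hbr.resolve_left hf
  have hlamA : lam hA = 0 := by
    have := hwt hA
    rw [hAv, eq_comm, smul_eq_zero] at this
    exact this.resolve_right hv
  -- κ(hA, z) = α z for all z : H
  have hκ : ∀ z : H, killingForm K L (hA : L) (z : L) = α z := fun z =>
    LinearMap.BilinForm.apply_toDual_symm_apply
      (hB := LieAlgebra.IsKilling.traceForm_cartan_nondegenerate K L H) _ _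
  have hsymm : killingForm K L (hA : L) (hlam : L) = killingForm K L (hlam : L) (hA : L) :=
    LieModule.traceForm_comm K L L _ _
  rw [← hκ hlam, hsymm, hdual hA, hlamA]
end

section
/- Let K be an algebraically closed field of characteristic zero, L a finite-dimensional semisimple Lie algebra over K with nondegenerate Killing form κ, and H a splitting Cartan subalgebra of L. Let M be a finite-dimensional L-module and v ∈ M a nonzero weight vector of weight λ such that for every root α, at least one of the following holds: x·v = 0 for all x ∈ L_α, or y·v = 0 for all y ∈ L_{−α}. Let h_λ ∈ H be the unique element with κ(h_λ, x) = λ(x) for all x ∈ H. Then for every root α, one has ⁅h_λ, x⁆ = 0 for all x ∈ L_α if and only if both x·v = 0 for all x ∈ L_α and y·v = 0 for all y ∈ L_{−α}. In other words, the centralizer of h_λ in L is exactly H plus the sum of the root spaces L_α over those roots α for which both L_α and L_{−α} annihilate v. -/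
open LieModule LieAlgebra LieAlgebra.IsKilling

lemma rootSpace'_eq_rootSpace {K L : Type*} [Field K] [IsAlgClosed K] [CharZero K]
    [LieRing L] [LieAlgebra K L] [FiniteDimensional K L]
    [LieAlgebra.IsKilling K L]
    (H : LieSubalgebra K L) [H.IsCartanSubalgebra] (β : H → K) (α : Module.Dual K H)
    (hβ : ⇑α = β) :
    rootSpace' H α = (rootSpace H β).toSubmodule := by
  subst hβ
  ext x
  simp only [rootSpace', Submodule.mem_iInf, Module.End.mem_eigenspace_iff, ad_apply,
    LieSubmodule.mem_toSubmodule, rootSpace]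
  constructor
  · intro hx
    rw [mem_genWeightSpace]
    intro h
    exact ⟨1, by simp [toEnd_apply_apply, LieSubalgebra.coe_bracket_of_module, hx h, sub_self]⟩
  · intro hx h
    exact lie_eq_smul_of_mem_rootSpace hx h


set_option maxHeartbeats 1000000 in
/-- Let `L` be a finite-dimensional semisimple Lie algebra over an algebraically closed
field of characteristic zero with nondegenerate Killing form `κ`, `H` a (splitting)
Cartan subalgebra, `M` a finite-dimensional `L`-module and `v ∈ M` a nonzero weight
vector of weight `λ` such that for every root `α` at least one of `L_α`, `L_{−α}`
annihilates `v`.  Let `h_λ ∈ H` be the unique element with `κ(h_λ, x) = λ(x)` for all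
`x ∈ H`.  Then for every root `α`: `⁅h_λ, x⁆ = 0` for all `x ∈ L_α` if and only if both
`L_α` and `L_{−α}` annihilate `v`.  (That is, the centralizer of `h_λ` is exactly `H`
plus the sum of the root spaces of those roots whose root space and its opposite both
annihilate `v`.) -/
theorem centralizer_of_killing_dual_is_stabilizer
    {K L : Type*} [Field K] [IsAlgClosed K] [CharZero K]
    [LieRing L] [LieAlgebra K L] [FiniteDimensional K L]
    [LieAlgebra.IsSemisimple K L] [LieAlgebra.IsKilling K L]
    (H : LieSubalgebra K L) [H.IsCartanSubalgebra]
    (M : Type*) [AddCommGroup M] [Module K M] [LieRingModule L M] [LieModule K L M]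
    [FiniteDimensional K M]
    (v : M) (hv : v ≠ 0) (lam : Module.Dual K H)
    (hwt : ∀ h : H, ⁅(h : L), v⁆ = lam h • v)
    (hone : ∀ α : Module.Dual K H, IsRoot' H α →
      (∀ x ∈ rootSpace' H α, ⁅x, v⁆ = 0) ∨ (∀ y ∈ rootSpace' H (-α), ⁅y, v⁆ = 0))
    (hlam : H) (hdual : ∀ x : H, killingForm K L (hlam : L) (x : L) = lam x) :
    ∀ α : Module.Dual K H, IsRoot' H α →
      ((∀ x ∈ rootSpace' H α, ⁅(hlam : L), x⁆ = 0) ↔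
        ((∀ x ∈ rootSpace' H α, ⁅x, v⁆ = 0) ∧ (∀ y ∈ rootSpace' H (-α), ⁅y, v⁆ = 0))) := by
  intro α hα
  -- The weight corresponding to α
  have hspace : rootSpace' H α = (rootSpace H (⇑α)).toSubmodule :=
    rootSpace'_eq_rootSpace H _ α rfl
  have hne : rootSpace H (⇑α) ≠ ⊥ := by
    intro h
    exact hα.2 (by rw [hspace, h]; simp)
  set W : Weight K H L := ⟨⇑α, hne⟩ with hW
  have hWnz : W.IsNonZero := by
    intro h
    exact hα.1 (by ext x; exact congrFun h x)
  have hspaceW : rootSpace' H α = (rootSpace H (⇑W)).toSubmodule := hspace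
  have hspace' : rootSpace' H (-α) = (rootSpace H (⇑(-W))).toSubmodule :=
    rootSpace'_eq_rootSpace H _ (-α) (by ext x; simp [hW])
  -- identify hlam
  have hlam_eq : (hlam : H) = (cartanEquivDual H).symm lam := by
    rw [LinearEquiv.eq_symm_apply]
    ext x
    exact hdual x
  -- key scalar computation : α hlam = lam ((cartanEquivDual H).symm α)
  have key : α hlam = lam ((cartanEquivDual H).symm α) := by
    calc α hlam = (cartanEquivDual H ((cartanEquivDual H).symm α)) hlam := by
          rw [LinearEquiv.apply_symm_apply]
      _ = traceForm K H L ((cartanEquivDual H).symm α) hlam := rfl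
      _ = traceForm K H L hlam ((cartanEquivDual H).symm α) := by rw [traceForm_comm]
      _ = lam ((cartanEquivDual H).symm α) := hdual _
  -- membership translation helpers
  have memα : ∀ x : L, x ∈ rootSpace' H α ↔ x ∈ rootSpace H (⇑W) := by
    intro x
    rw [hspace]; rfl
  have memν : ∀ x : L, x ∈ rootSpace' H (-α) ↔ x ∈ rootSpace H (⇑(-W)) := by
    intro x
    rw [hspace']; rfl
  have hbra : ∀ x ∈ rootSpace' H α, ⁅(hlam : L), x⁆ = α hlam • x := by
    intro x hx
    have := (Submodule.mem_iInf
      (fun h : H => Module.End.eigenspace (ad K L (h : L)) (α h))).mp hx hlam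
    rw [Module.End.mem_eigenspace_iff, ad_apply] at this
    exact this
  -- the sl2 triple attached to α
  obtain ⟨h, e, f, ht, heα, hfα⟩ := exists_isSl2Triple_of_weight_isNonZero hWnz
  have hWd : (W : Module.Dual K H) = α := by ext x; rfl
  have hcor : h = ↑(coroot W) := ht.h_eq_coroot hWnz heα hfα
  have hhv : ⁅h, v⁆ = lam (coroot W) • v := by rw [hcor]; exact hwt _
  -- relation between lam (coroot W) and α hlam
  have tne : α ((cartanEquivDual H).symm α) ≠ 0 := by
    have := root_apply_cartanEquivDual_symm_ne_zero hWnz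
    rw [hWd] at this
    exact this
  have hcor2 : lam (coroot W) =
      (2 * (α ((cartanEquivDual H).symm α))⁻¹) * lam ((cartanEquivDual H).symm α) := by
    simp only [coroot, map_nsmul, map_smul, smul_eq_mul, nsmul_eq_mul]
    rw [hWd]
    show (2 : ℕ) * ((α ((cartanEquivDual H).symm α))⁻¹ * lam ((cartanEquivDual H).symm α)) = _
    push_cast
    ring
  have lamcor : lam (coroot W) = 0 ↔ α hlam = 0 := by
    rw [key, hcor2]
    have h2 : (2 : K) * (α ((cartanEquivDual H).symm α))⁻¹ ≠ 0 :=
      mul_ne_zero two_ne_zero (inv_ne_zero tne)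
    exact ⟨fun hz => (mul_eq_zero.mp hz).resolve_left h2, fun hz => by rw [hz, mul_zero]⟩
  constructor
  · -- forward direction
    intro hcent
    have h0 : α hlam = 0 := by
      obtain ⟨x₀, hx₀, hx₀ne⟩ := (Submodule.ne_bot_iff _).mp hα.2
      have := hcent x₀ hx₀
      rw [hbra x₀ hx₀] at this
      exact (smul_eq_zero.mp this).resolve_right hx₀ne
    have hc0 : lam (coroot W) = 0 := lamcor.mpr h0
    rcases hone α hα with hA | hB
    · -- rootSpace α annihilates v; show rootSpace (−α) does too
      refine ⟨hA, ?_⟩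
      have P : ht.HasPrimitiveVectorWith v (0 : K) :=
        ⟨hv, by rw [hhv, hc0, zero_smul], hA e ((memα e).mpr heα)⟩
      have hfv : ⁅f, v⁆ = 0 := by
        have := P.pow_toEnd_f_eq_zero_of_eq_nat (n := 0) (by norm_num)
        simpa [pow_one] using this
      -- rootSpace' (−α) = span {f}
      have hfne : f ≠ 0 := ht.f_ne_zero
      have hWnegnz : (-W).IsNonZero := fun hzz => hWnz (by
        have := hzz.neg; rwa [neg_neg] at this)
      have hsp : rootSpace' H (-α) = K ∙ f := by
        rw [hspace']
        refine (Submodule.eq_of_le_of_finrank_le ?_ ?_).symm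
        · rw [Submodule.span_singleton_le_iff_mem]
          exact hfα
        · rw [finrank_span_singleton hfne]
          exact le_of_eq (finrank_rootSpace_eq_one (-W) hWnegnz)
      intro y hy
      rw [hsp, Submodule.mem_span_singleton] at hy
      obtain ⟨c, rfl⟩ := hy
      rw [smul_lie, hfv, smul_zero]
    · -- rootSpace (−α) annihilates v; show rootSpace α does too
      refine ⟨?_, hB⟩
      have P : ht.symm.HasPrimitiveVectorWith v (0 : K) :=
        ⟨hv, by rw [neg_lie, hhv, hc0]; simp, hB f ((memν f).mpr hfα)⟩
      have hev : ⁅e, v⁆ = 0 := by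
        have := P.pow_toEnd_f_eq_zero_of_eq_nat (n := 0) (by norm_num)
        simpa [pow_one] using this
      have hene : e ≠ 0 := ht.e_ne_zero
      have hsp : rootSpace' H α = K ∙ e := by
        rw [hspaceW]
        refine (Submodule.eq_of_le_of_finrank_le ?_ ?_).symm
        · rw [Submodule.span_singleton_le_iff_mem]
          exact heα
        · rw [finrank_span_singleton hene]
          exact le_of_eq (finrank_rootSpace_eq_one W hWnz)
      intro x hx
      rw [hsp, Submodule.mem_span_singleton] at hx
      obtain ⟨c, rfl⟩ := hx
      rw [smul_lie, hev, smul_zero]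
  · -- reverse direction
    rintro ⟨hA, hB⟩ x hx
    have hev : ⁅e, v⁆ = 0 := hA e ((memα e).mpr heα)
    have hfv : ⁅f, v⁆ = 0 := hB f ((memν f).mpr hfα)
    have hhv0 : ⁅h, v⁆ = 0 := by
      rw [← ht.lie_e_f, lie_lie, hev, hfv, lie_zero, lie_zero, sub_zero]
    have hc0 : lam (coroot W) = 0 := by
      rw [hhv] at hhv0
      exact (smul_eq_zero.mp hhv0).resolve_right hv
    rw [hbra x hx, lamcor.mp hc0, zero_smul]
end

section
/- Let V be a real inner product space, let m ≥ 2 be a natural number, and let u, v ∈ V be unit vectors with ⟪u, v⟫ = cos(π/m). Let r_u and r_v denote the orthogonal reflections of V in the hyperplanes orthogonal to u and v respectively, r_u(x) = x − 2⟪x,u⟫u and r_v(x) = x − 2⟪x,v⟫v. Then the composition r_u ∘ r_v has order exactly m: (r_u ∘ r_v)^m = id, and (r_u ∘ r_v)^j ≠ id for every j with 1 ≤ j < m. -/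
open RealInnerProductSpace Real

/-!
Put `θ = π / m`. Since `0 < θ < π`, the unit vector `u` extends to an orthonormal pair `u, e` with
`v = cos θ • u - sin θ • e`. Then `r_u ∘ r_v` fixes the orthogonal complement of the plane spanned
by `u, e` and rotates that plane by `2θ`, so its `j`-th iterate is the rotation by `2πj / m`, which
is the identity exactly when `m ∣ j`.
-/

section

variable {V : Type*} [NormedAddCommGroup V] [InnerProductSpace ℝ V]

/-- For an orthonormal pair `e₁, e₂`, the rotation by `α` that turns `e₁` towards `e₂` and fixes
`{e₁, e₂}ᗮ` pointwise. -/
noncomputable def planeRotation (e₁ e₂ : V) (α : ℝ) (x : V) : V :=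
  x - ⟪x, e₁⟫ • e₁ - ⟪x, e₂⟫ • e₂
    + (cos α * ⟪x, e₁⟫ - sin α * ⟪x, e₂⟫) • e₁ + (sin α * ⟪x, e₁⟫ + cos α * ⟪x, e₂⟫) • e₂

section planeRotation

variable {e₁ e₂ : V}

@[simp]
theorem planeRotation_zero (e₁ e₂ : V) : planeRotation e₁ e₂ 0 = id := by
  funext x
  simp only [planeRotation, cos_zero, sin_zero, id_eq]
  module

theorem planeRotation_comp (h₁ : ‖e₁‖ = 1) (h₂ : ‖e₂‖ = 1) (h₁₂ : ⟪e₁, e₂⟫ = 0) (α β : ℝ) :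
    planeRotation e₁ e₂ α ∘ planeRotation e₁ e₂ β = planeRotation e₁ e₂ (α + β) := by
  have h₁₁ : ⟪e₁, e₁⟫ = 1 := by rw [real_inner_self_eq_norm_sq, h₁, one_pow]
  have h₂₂ : ⟪e₂, e₂⟫ = 1 := by rw [real_inner_self_eq_norm_sq, h₂, one_pow]
  have h₂₁ : ⟪e₂, e₁⟫ = 0 := by rw [real_inner_comm, h₁₂]
  funext x
  simp only [Function.comp_apply, planeRotation, inner_add_left, inner_sub_left,
    real_inner_smul_left, h₁₁, h₂₂, h₁₂, h₂₁, cos_add, sin_add]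
  match_scalars <;> ring

theorem planeRotation_iterate (h₁ : ‖e₁‖ = 1) (h₂ : ‖e₂‖ = 1) (h₁₂ : ⟪e₁, e₂⟫ = 0) (α : ℝ)
    (k : ℕ) : (planeRotation e₁ e₂ α)^[k] = planeRotation e₁ e₂ (k * α) := by
  induction k with
  | zero => simp
  | succ k ih =>
    rw [Function.iterate_succ', ih, planeRotation_comp h₁ h₂ h₁₂]
    push_cast
    ring_nf

theorem planeRotation_eq_id_iff (h₁ : ‖e₁‖ = 1) (h₁₂ : ⟪e₁, e₂⟫ = 0) (α : ℝ) :
    planeRotation e₁ e₂ α = id ↔ cos α = 1 := by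
  constructor
  · intro h
    have h₁₁ : ⟪e₁, e₁⟫ = 1 := by rw [real_inner_self_eq_norm_sq, h₁, one_pow]
    have h₂₁ : ⟪e₂, e₁⟫ = 0 := by rw [real_inner_comm, h₁₂]
    have he₁ := congrArg (fun f => ⟪f e₁, e₁⟫) h
    simpa only [planeRotation, inner_add_left, inner_sub_left, real_inner_smul_left, h₁₁, h₁₂,
      h₂₁, id_eq, mul_one, mul_zero, sub_zero, add_zero, sub_self, zero_add] using he₁
  · intro h
    have hsin : sin α = 0 := by nlinarith [sin_sq_add_cos_sq α]
    funext x
    simp only [planeRotation, h, hsin, one_mul, zero_mul, sub_zero, zero_add, id_eq]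
    module

end planeRotation

theorem reflection_comp_reflection_eq_planeRotation {e₁ e₂ : V} (h₁ : ‖e₁‖ = 1)
    (h₁₂ : ⟪e₁, e₂⟫ = 0) (θ : ℝ) :
    (fun x => x - (2 * ⟪x, e₁⟫) • e₁) ∘
        (fun x => x - (2 * ⟪x, cos θ • e₁ - sin θ • e₂⟫) • (cos θ • e₁ - sin θ • e₂)) =
      planeRotation e₁ e₂ (2 * θ) := by
  have h₁₁ : ⟪e₁, e₁⟫ = 1 := by rw [real_inner_self_eq_norm_sq, h₁, one_pow]
  have h₂₁ : ⟪e₂, e₁⟫ = 0 := by rw [real_inner_comm, h₁₂]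
  funext x
  simp only [Function.comp_apply, planeRotation, inner_sub_left, inner_sub_right,
    real_inner_smul_left, real_inner_smul_right, h₁₁, h₂₁, cos_two_mul, sin_two_mul]
  match_scalars
  · ring
  · ring
  · linear_combination (-2 * ⟪x, e₂⟫) * sin_sq_add_cos_sq θ

theorem exists_unit_orthogonal_eq_cos_smul_sub_sin_smul {u v : V} (hu : ‖u‖ = 1) (hv : ‖v‖ = 1)
    {θ : ℝ} (huv : ⟪u, v⟫ = cos θ) (hθ : sin θ ≠ 0) :
    ∃ e : V, ‖e‖ = 1 ∧ ⟪u, e⟫ = 0 ∧ v = cos θ • u - sin θ • e := by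
  have huu : ⟪u, u⟫ = 1 := by rw [real_inner_self_eq_norm_sq, hu, one_pow]
  have hvv : ⟪v, v⟫ = 1 := by rw [real_inner_self_eq_norm_sq, hv, one_pow]
  have hvu : ⟪v, u⟫ = cos θ := by rw [real_inner_comm, huv]
  set e := (sin θ)⁻¹ • (cos θ • u - v)
  have hee : ‖e‖ ^ 2 = 1 := by
    rw [← real_inner_self_eq_norm_sq]
    simp only [e, inner_sub_left, inner_sub_right, real_inner_smul_left, real_inner_smul_right,
      huu, hvv, huv, hvu]
    field_simp
    linear_combination -sin_sq_add_cos_sq θ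
  refine ⟨e, (pow_eq_one_iff_of_nonneg (norm_nonneg e) two_ne_zero).mp hee, ?_, ?_⟩
  · simp only [e, inner_sub_right, real_inner_smul_right, huu, huv, mul_one, sub_self, mul_zero]
  · simp only [e, smul_smul, mul_inv_cancel₀ hθ, one_smul, sub_sub_cancel]

end

/-- Let `V` be a real inner product space, `m ≥ 2`, and `u, v` unit vectors with
`⟪u, v⟫ = cos (π / m)`.  Let `r_u x = x − 2⟪x,u⟫u` and `r_v x = x − 2⟪x,v⟫v` be the
orthogonal reflections in the hyperplanes orthogonal to `u` and `v`.  Then `r_u ∘ r_v`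
has order exactly `m`: `(r_u ∘ r_v)^[m] = id`, and `(r_u ∘ r_v)^[j] ≠ id` for all
`1 ≤ j < m`. -/
theorem product_of_two_reflections_has_order_m
    {V : Type*} [NormedAddCommGroup V] [InnerProductSpace ℝ V]
    (m : ℕ) (hm : 2 ≤ m) (u v : V) (hu : ‖u‖ = 1) (hv : ‖v‖ = 1)
    (huv : ⟪u, v⟫ = Real.cos (Real.pi / m))
    (ru rv : V → V)
    (hru : ru = fun x => x - (2 * ⟪x, u⟫) • u)
    (hrv : rv = fun x => x - (2 * ⟪x, v⟫) • v) :
    (ru ∘ rv)^[m] = id ∧ ∀ j : ℕ, 1 ≤ j → j < m → (ru ∘ rv)^[j] ≠ id := by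
  have hm₀ : (0 : ℝ) < m := Nat.cast_pos.2 (by omega)
  have hsin : sin (π / m) ≠ 0 :=
    (sin_pos_of_pos_of_lt_pi (by positivity) (div_lt_self pi_pos (by exact_mod_cast hm))).ne'
  obtain ⟨e, he, hue, rfl⟩ := exists_unit_orthogonal_eq_cos_smul_sub_sin_smul hu hv huv hsin
  have hiterate_eq_id (k : ℕ) : (ru ∘ rv)^[k] = id ↔ cos (2 * π * (k / m)) = 1 := by
    rw [hru, hrv, reflection_comp_reflection_eq_planeRotation hu hue,
      planeRotation_iterate hu he hue, planeRotation_eq_id_iff hu hue]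
    ring_nf
  refine ⟨(hiterate_eq_id m).2 ?_, fun j hj hjm => (hiterate_eq_id j).not.2 ?_⟩
  · rw [div_self hm₀.ne', mul_one, cos_two_pi]
  · have hj₀ : (0 : ℝ) < j / m := div_pos (by exact_mod_cast hj) hm₀
    have hj₁ : (j : ℝ) / m < 1 := (div_lt_one hm₀).2 (by exact_mod_cast hjm)
    rw [cos_eq_one_iff_of_lt_of_lt (by nlinarith [pi_pos]) (by nlinarith [pi_pos])]
    positivity
end
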